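/- arXiv:1102.1776 — 3 statements merged into one kernel-verified Lean document; each statement's English description precedes it below -/
import Mathlib

section
/- For a 2×2 matrix A with entries in the Hamilton quaternions, rdet₁(A A*) = rdet₁(A* A), where rdet₁ B = b₁₁b₂₂ - b₁₂b₂₁ and A* is the conjugate transpose. -/
/-!
Write `a, b, c, d` for the entries of `A` and `N = normSq`. The diagonal entries of `A Aᴴ` are
real and its off-diagonal entries are conjugate to each other, so
`rdet₁ (A Aᴴ) = N a N d + N b N c - 2 Re (a c̄ d b̄)`. Applying this to `Aᴴ` gives
`rdet₁ (Aᴴ A) = N a N d + N c N b - 2 Re (ā b d̄ c)`, and the two real parts agree because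
`Re x̄ = Re x` and `Re (x y) = Re (y x)`.
-/

noncomputable def rdet1 (B : Matrix (Fin 2) (Fin 2) (Quaternion ℝ)) : Quaternion ℝ :=
  B 0 0 * B 1 1 - B 0 1 * B 1 0

open Matrix

namespace Quaternion

variable {R : Type*} [CommRing R]

theorem re_mul_comm (a b : ℍ[R]) : (a * b).re = (b * a).re := by
  simp only [re_mul]
  ring

theorem gram_det_eq_coe (a b c d : ℍ[R]) :
    (a * star a + b * star b) * (c * star c + d * star d)
        - (a * star c + b * star d) * (c * star a + d * star b) =
      ↑(normSq a * normSq d + normSq b * normSq c - 2 * (a * star c * d * star b).re) := by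
  have hcross : c * star a + d * star b = star (a * star c + b * star d) := by
    simp only [star_add, star_mul, star_star]
  rw [hcross, self_mul_star, self_mul_star, self_mul_star, self_mul_star, self_mul_star,
    normSq_add, map_mul, map_mul, normSq_star, normSq_star, star_mul, star_star, ← mul_assoc]
  simp only [← coe_add, ← coe_mul, ← coe_sub]
  congr 1
  ring

end Quaternion

open Quaternion

theorem rdet1_mul_conjTranspose (A : Matrix (Fin 2) (Fin 2) ℍ[ℝ]) :
    rdet1 (A * Aᴴ) = ↑(normSq (A 0 0) * normSq (A 1 1) + normSq (A 0 1) * normSq (A 1 0)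
      - 2 * (A 0 0 * star (A 1 0) * A 1 1 * star (A 0 1)).re) := by
  simp only [rdet1, mul_apply, conjTranspose_apply, Fin.sum_univ_two]
  exact gram_det_eq_coe _ _ _ _

theorem rdet1_AAstar_eq_rdet1_AstarA (A : Matrix (Fin 2) (Fin 2) (Quaternion ℝ)) :
    rdet1 (A * A.conjTranspose) = rdet1 (A.conjTranspose * A) := by
  have hstar := rdet1_mul_conjTranspose Aᴴ
  rw [conjTranspose_conjTranspose] at hstar
  rw [rdet1_mul_conjTranspose, hstar]
  simp only [conjTranspose_apply, star_star, normSq_star]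
  have hre : (star (A 0 0) * A 0 1 * star (A 1 1) * A 1 0).re
      = (A 0 0 * star (A 1 0) * A 1 1 * star (A 0 1)).re := by
    rw [← re_star]
    simp only [star_mul, star_star, ← mul_assoc]
    rw [re_mul_comm]
    simp only [← mul_assoc]
  rw [hre, mul_comm (normSq (A 1 0))]
end

section
/- For 2×2 matrices A, B over the Hamilton quaternions, ddet(AB) = ddet(A) · ddet(B), where ddet M = rdet₁(M M*) with rdet₁ C = c₁₁c₂₂ - c₁₂c₂₁. -/
noncomputable def ddet (M : Matrix (Fin 2) (Fin 2) (Quaternion ℝ)) : Quaternion ℝ :=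
  rdet1 (M * M.conjTranspose)

/-!
Sending `i, j, k` to `!![I, 0; 0, -I]`, `!![0, 1; -1, 0]`, `!![0, I; I, 0]` embeds `ℍ` into
`M₂(ℂ)` as an `ℝ`-algebra; applied entrywise it turns a quaternion `2 × 2` matrix `M` into its
`4 × 4` complex adjoint matrix `χ M`, and `χ` is multiplicative. Expanding both sides shows that
`ddet M` is the real number `det (χ M)` (Study's determinant), so `ddet` inherits multiplicativity
from `det`.
-/

open Matrix Complex

def complexMatrixBasis : QuaternionAlgebra.Basis (Matrix (Fin 2) (Fin 2) ℂ) (-1 : ℝ) 0 (-1) where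
  i := !![I, 0; 0, -I]
  j := !![0, 1; -1, 0]
  k := !![0, I; I, 0]
  i_mul_i := by ext i j; fin_cases i <;> fin_cases j <;> simp
  j_mul_j := by ext i j; fin_cases i <;> fin_cases j <;> simp
  i_mul_j := by ext i j; fin_cases i <;> fin_cases j <;> simp
  j_mul_i := by ext i j; fin_cases i <;> fin_cases j <;> simp

noncomputable def toComplexMatrix : Quaternion ℝ →ₐ[ℝ] Matrix (Fin 2) (Fin 2) ℂ :=
  complexMatrixBasis.liftHom

theorem toComplexMatrix_apply (q : Quaternion ℝ) :
    toComplexMatrix q = !![⟨q.re, q.imI⟩, ⟨q.imJ, q.imK⟩; ⟨-q.imJ, q.imK⟩, ⟨q.re, -q.imI⟩] := by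
  change complexMatrixBasis.lift q = _
  ext i j
  fin_cases i <;> fin_cases j <;> apply Complex.ext <;>
    simp [QuaternionAlgebra.Basis.lift, complexMatrixBasis, Algebra.algebraMap_eq_smul_one]

noncomputable def complexAdjoint :
    Matrix (Fin 2) (Fin 2) (Quaternion ℝ) →ₐ[ℝ] Matrix (Fin 4) (Fin 4) ℂ :=
  ((reindexAlgEquiv ℝ ℂ finProdFinEquiv).toAlgHom.comp
    (compAlgEquiv (Fin 2) (Fin 2) ℂ ℝ).toAlgHom).comp toComplexMatrix.mapMatrix

theorem complexAdjoint_apply (M : Matrix (Fin 2) (Fin 2) (Quaternion ℝ)) :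
    complexAdjoint M =
      let φ := fun i j => toComplexMatrix (M i j)
      !![φ 0 0 0 0, φ 0 0 0 1, φ 0 1 0 0, φ 0 1 0 1;
         φ 0 0 1 0, φ 0 0 1 1, φ 0 1 1 0, φ 0 1 1 1;
         φ 1 0 0 0, φ 1 0 0 1, φ 1 1 0 0, φ 1 1 0 1;
         φ 1 0 1 0, φ 1 0 1 1, φ 1 1 1 0, φ 1 1 1 1] := by
  ext i j
  fin_cases i <;> fin_cases j <;> rfl

theorem det_fin_four {R : Type*} [CommRing R] (A : Matrix (Fin 4) (Fin 4) R) :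
    A.det =
      A 0 0 * A 1 1 * A 2 2 * A 3 3 - A 0 0 * A 1 1 * A 2 3 * A 3 2
      - A 0 0 * A 1 2 * A 2 1 * A 3 3 + A 0 0 * A 1 2 * A 2 3 * A 3 1
      + A 0 0 * A 1 3 * A 2 1 * A 3 2 - A 0 0 * A 1 3 * A 2 2 * A 3 1
      - A 0 1 * A 1 0 * A 2 2 * A 3 3 + A 0 1 * A 1 0 * A 2 3 * A 3 2
      + A 0 1 * A 1 2 * A 2 0 * A 3 3 - A 0 1 * A 1 2 * A 2 3 * A 3 0
      - A 0 1 * A 1 3 * A 2 0 * A 3 2 + A 0 1 * A 1 3 * A 2 2 * A 3 0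
      + A 0 2 * A 1 0 * A 2 1 * A 3 3 - A 0 2 * A 1 0 * A 2 3 * A 3 1
      - A 0 2 * A 1 1 * A 2 0 * A 3 3 + A 0 2 * A 1 1 * A 2 3 * A 3 0
      + A 0 2 * A 1 3 * A 2 0 * A 3 1 - A 0 2 * A 1 3 * A 2 1 * A 3 0
      - A 0 3 * A 1 0 * A 2 1 * A 3 2 + A 0 3 * A 1 0 * A 2 2 * A 3 1
      + A 0 3 * A 1 1 * A 2 0 * A 3 2 - A 0 3 * A 1 1 * A 2 2 * A 3 0
      - A 0 3 * A 1 2 * A 2 0 * A 3 1 + A 0 3 * A 1 2 * A 2 1 * A 3 0 := by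
  simp only [det_succ_row_zero, Nat.succ_eq_add_one, Nat.reduceAdd, Fin.isValue, submatrix_apply,
    Fin.succ_zero_eq_one, Fin.succAbove, submatrix_submatrix, Function.comp_apply,
    Fin.succ_one_eq_two, det_unique, Fin.default_eq_zero, Fin.reduceSucc, Fin.castSucc_zero,
    Fin.sum_univ_succ, Fin.coe_ofNat_eq_mod, Nat.zero_mod, pow_zero, one_mul, lt_self_iff_false,
    ↓reduceIte, Fin.castSucc_one, Finset.univ_unique, Fin.val_succ, Fin.val_eq_zero, zero_add,
    pow_one, Fin.castSucc_succ, neg_mul, Fin.succ_pos, Finset.sum_neg_distrib,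
    Finset.sum_singleton, not_lt_zero, Fin.reduceCastSucc, even_two, Even.neg_pow, one_pow,
    Fin.reduceLT, Fin.lt_one_iff, Fin.reduceEq]
  ring

theorem im_det_complexAdjoint (M : Matrix (Fin 2) (Fin 2) (Quaternion ℝ)) :
    (complexAdjoint M).det.im = 0 := by
  simp only [complexAdjoint_apply, det_fin_four, toComplexMatrix_apply, of_apply, cons_val',
    cons_val_zero, cons_val_fin_one, cons_val_one, cons_val, add_im, sub_im, mul_im, mul_re,
    mul_neg, sub_neg_eq_add]
  ring

set_option maxHeartbeats 2000000 in
theorem ddet_eq_re_det_complexAdjoint (M : Matrix (Fin 2) (Fin 2) (Quaternion ℝ)) :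
    ddet M = ((complexAdjoint M).det.re : Quaternion ℝ) := by
  simp only [complexAdjoint_apply, det_fin_four, toComplexMatrix_apply]
  apply Quaternion.ext <;>
  · simp only [ddet, rdet1, Matrix.mul_apply, conjTranspose_apply, Fin.sum_univ_two,
      Quaternion.re_add, Quaternion.re_sub, Quaternion.re_neg, Quaternion.re_mul,
      Quaternion.re_star, Quaternion.re_coe, Quaternion.imI_add, Quaternion.imI_sub,
      Quaternion.imI_neg, Quaternion.imI_mul, Quaternion.imI_star, Quaternion.imI_coe,
      Quaternion.imJ_add, Quaternion.imJ_sub, Quaternion.imJ_neg, Quaternion.imJ_mul,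
      Quaternion.imJ_star, Quaternion.imJ_coe, Quaternion.imK_add, Quaternion.imK_sub,
      Quaternion.imK_neg, Quaternion.imK_mul, Quaternion.imK_star, Quaternion.imK_coe,
      Quaternion.coe_add, Quaternion.coe_sub, Quaternion.coe_mul, Quaternion.coe_neg,
      of_apply, cons_val', cons_val_zero, cons_val_fin_one, cons_val_one, cons_val,
      add_re, sub_re, mul_re, mul_im, Fin.isValue]
    ring

theorem ddet_mul (A B : Matrix (Fin 2) (Fin 2) (Quaternion ℝ)) :
    ddet (A * B) = ddet A * ddet B := by
  rw [ddet_eq_re_det_complexAdjoint, map_mul, det_mul, Complex.mul_re, im_det_complexAdjoint,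
    im_det_complexAdjoint, mul_zero, sub_zero, Quaternion.coe_mul,
    ← ddet_eq_re_det_complexAdjoint, ← ddet_eq_re_det_complexAdjoint]
end

section
/- Let A be a 2×2 matrix over the Hamilton quaternions whose second row is a left scalar multiple of its first row (row₂ = c · row₁ for some quaternion c). Then rdet₁(A*A) = 0. -/
open Matrix Quaternion


lemma rdet1_smul (r : ℝ) (B : Matrix (Fin 2) (Fin 2) ℍ) : rdet1 (r • B) = r ^ 2 • rdet1 B := by
  simp only [rdet1, Matrix.smul_apply, smul_mul_smul_comm, smul_sub, pow_two]

lemma rdet1_vecMulVec_star_self (v : Fin 2 → ℍ) : rdet1 (vecMulVec (star v) v) = 0 := by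
  calc rdet1 (vecMulVec (star v) v)
      = star (v 0) * v 0 * (star (v 1) * v 1) - star (v 0) * (v 1 * star (v 1)) * v 0 := by
        simp only [rdet1, vecMulVec_apply, Pi.star_apply, mul_assoc]
    _ = 0 := by
        rw [star_mul_self (v 1), self_mul_star (v 1), mul_coe_eq_smul, mul_coe_eq_smul,
          smul_mul_assoc, sub_self]

lemma Quaternion.star_dotProduct_self {n : Type*} [Fintype n] (u : n → ℍ) :
    star u ⬝ᵥ u = ((∑ i, normSq (u i) : ℝ) : ℍ) := by
  simp only [dotProduct, Pi.star_apply, star_mul_self, ← algebraMap_def, map_sum]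

lemma Quaternion.conjTranspose_vecMulVec_mul_self {m n : Type*} [Fintype m] (u : m → ℍ)
    (v : n → ℍ) :
    (vecMulVec u v)ᴴ * vecMulVec u v = (∑ i, normSq (u i)) • vecMulVec (star v) v := by
  rw [conjTranspose_vecMulVec, vecMulVec_mul_vecMulVec, star_dotProduct_self]
  ext i j : 1
  simp only [vecMulVec_apply, Pi.smul_apply, Matrix.smul_apply, smul_eq_mul, coe_mul_eq_smul,
    mul_smul_comm]

theorem ddet_zero_of_row_dependent (A : Matrix (Fin 2) (Fin 2) (Quaternion ℝ))
    (c : Quaternion ℝ) (h : ∀ j, A 1 j = c * A 0 j) :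
    rdet1 (A.conjTranspose * A) = 0 := by
  have hA : A = vecMulVec ![1, c] (A 0) := by
    ext i j : 1
    fin_cases i <;> simp [vecMulVec_apply, h]
  rw [hA, conjTranspose_vecMulVec_mul_self, rdet1_smul, rdet1_vecMulVec_star_self, smul_zero]
end
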